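/- arXiv:2003.09265 — 6 statements merged into one kernel-verified Lean document; each statement's English description precedes it below -/
import Mathlib

section
/- Let 𝒜 = {A₁,…,A_m} be an arrangement of finite cameras whose chiral domain D_𝒜 is nonempty. Then D_𝒜 equals the set {q ∈ ℝ⁴ ∖ {0} : (n_∞ᵀq)(n_iᵀq) ≥ 0 for all i = 1,…,m and (n_iᵀq)(n_jᵀq) ≥ 0 for all i, j = 1,…,m}, where n_i is the principal ray of A_i. (All the defining polynomials are quadratic, so membership is invariant under nonzero scaling of q, and the equality can equivalently be read in ℙ³.) -/
open Matrix

noncomputable section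

/-- Left 3x3 block `G` of a 3x4 camera matrix `A = [G | t]`. -/
def leftBlock (A : Matrix (Fin 3) (Fin 4) ℝ) : Matrix (Fin 3) (Fin 3) ℝ :=
  Matrix.of fun i j => A i j.castSucc

/-- Last column `t` of a 3x4 camera matrix `A = [G | t]`. -/
def tCol (A : Matrix (Fin 3) (Fin 4) ℝ) : Fin 3 → ℝ := fun i => A i 3

/-- A camera is finite if its left 3x3 block is invertible. -/
def FiniteCam (A : Matrix (Fin 3) (Fin 4) ℝ) : Prop := (leftBlock A).det ≠ 0

/-- The center `(-G⁻¹ t, 1)` of a finite camera. -/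
def camCenter (A : Matrix (Fin 3) (Fin 4) ℝ) : Fin 4 → ℝ :=
  Fin.snoc (-((leftBlock A)⁻¹ *ᵥ tCol A)) 1

/-- The principal ray `det G • (third row of A)`. -/
def principalRay (A : Matrix (Fin 3) (Fin 4) ℝ) : Fin 4 → ℝ :=
  (leftBlock A).det • A 2

/-- `n_∞ = (0,0,0,1)`. -/
def nInf : Fin 4 → ℝ := Fin.snoc (0 : Fin 3 → ℝ) 1

/-- The chiral domain `D_𝒜`: the closure, within `ℝ⁴ ∖ {0}` (i.e. ambient closure
intersected with `ℝ⁴ ∖ {0}`), of the set of finite vectors (last coordinate nonzero)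
having positive depth in every camera of the arrangement. -/
def chiralDomain {m : ℕ} (A : Fin m → Matrix (Fin 3) (Fin 4) ℝ) : Set (Fin 4 → ℝ) :=
  closure {q : Fin 4 → ℝ | nInf ⬝ᵥ q ≠ 0 ∧ ∀ i, 0 < (principalRay (A i) ⬝ᵥ q) * (nInf ⬝ᵥ q)}
    ∩ {q : Fin 4 → ℝ | q ≠ 0}

/-- If the chiral domain of an arrangement of finite cameras is nonempty,
then it equals the set of nonzero vectors `q` satisfying `(n_∞ᵀq)(n_iᵀq) ≥ 0` for all `i`
and `(n_iᵀq)(n_jᵀq) ≥ 0` for all `i, j`. -/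
theorem chiralDomain_semialgebraic_description {m : ℕ}
    (A : Fin m → Matrix (Fin 3) (Fin 4) ℝ)
    (hfin : ∀ i, FiniteCam (A i))
    (hne : (chiralDomain A).Nonempty) :
    chiralDomain A =
      {q : Fin 4 → ℝ | q ≠ 0 ∧
        (∀ i, 0 ≤ (nInf ⬝ᵥ q) * (principalRay (A i) ⬝ᵥ q)) ∧
        (∀ i j, 0 ≤ (principalRay (A i) ⬝ᵥ q) * (principalRay (A j) ⬝ᵥ q))} := by
  have hdc : ∀ v : Fin 4 → ℝ, Continuous fun q : Fin 4 → ℝ => v ⬝ᵥ q := by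
    intro v
    simp only [dotProduct]
    exact continuous_finset_sum _ fun i _ => continuous_const.mul (continuous_apply i)
  set S := {q : Fin 4 → ℝ |
      nInf ⬝ᵥ q ≠ 0 ∧ ∀ i, 0 < (principalRay (A i) ⬝ᵥ q) * (nInf ⬝ᵥ q)} with hSdef
  set C := {q : Fin 4 → ℝ |
      (∀ i, 0 ≤ (nInf ⬝ᵥ q) * (principalRay (A i) ⬝ᵥ q)) ∧
      (∀ i j, 0 ≤ (principalRay (A i) ⬝ᵥ q) * (principalRay (A j) ⬝ᵥ q))} with hCdef
  have hCclosed : IsClosed C := by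
    have h1 : IsClosed (⋂ i, {q : Fin 4 → ℝ |
        0 ≤ (nInf ⬝ᵥ q) * (principalRay (A i) ⬝ᵥ q)}) :=
      isClosed_iInter fun i =>
        isClosed_le continuous_const ((hdc _).mul (hdc _))
    have h2 : IsClosed (⋂ i, ⋂ j, {q : Fin 4 → ℝ |
        0 ≤ (principalRay (A i) ⬝ᵥ q) * (principalRay (A j) ⬝ᵥ q)}) :=
      isClosed_iInter fun i => isClosed_iInter fun j =>
        isClosed_le continuous_const ((hdc _).mul (hdc _))
    have : C = (⋂ i, {q : Fin 4 → ℝ |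
        0 ≤ (nInf ⬝ᵥ q) * (principalRay (A i) ⬝ᵥ q)}) ∩
        (⋂ i, ⋂ j, {q : Fin 4 → ℝ |
        0 ≤ (principalRay (A i) ⬝ᵥ q) * (principalRay (A j) ⬝ᵥ q)}) := by
      ext q; simp [hCdef, Set.mem_iInter, Set.mem_setOf_eq]
    rw [this]
    exact h1.inter h2
  have hSC : S ⊆ C := by
    rintro q ⟨hb, hq⟩
    constructor
    · intro i
      have := hq i
      nlinarith
    · intro i j
      have h1 := hq i
      have h2 := hq j
      have hb2 : 0 < (nInf ⬝ᵥ q) * (nInf ⬝ᵥ q) := mul_self_pos.mpr hb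
      nlinarith
  ext q
  constructor
  · rintro ⟨hqcl, hq0⟩
    have hqC : q ∈ C := closure_minimal hSC hCclosed hqcl
    exact ⟨hq0, hqC.1, hqC.2⟩
  · rintro ⟨hq0, h1, h2⟩
    refine ⟨?_, hq0⟩
    -- get a point p in S
    obtain ⟨x, hx, -⟩ := hne
    obtain ⟨p, hpb, hp⟩ := closure_nonempty_iff.mp ⟨x, hx⟩
    set b := nInf ⬝ᵥ q with hbdef
    -- choose a sign s
    obtain ⟨s, hs, hsb, hsa⟩ : ∃ s : ℝ, (s = 1 ∨ s = -1) ∧ 0 ≤ s * b ∧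
        ∀ i, 0 ≤ s * (principalRay (A i) ⬝ᵥ q) := by
      by_cases hb : 0 ≤ b
      · by_cases ha : ∀ i, 0 ≤ principalRay (A i) ⬝ᵥ q
        · exact ⟨1, Or.inl rfl, by simpa using hb, by simpa using ha⟩
        · push_neg at ha
          obtain ⟨k, hk⟩ := ha
          refine ⟨-1, Or.inr rfl, ?_, fun i => ?_⟩
          · nlinarith [h1 k]
          · nlinarith [h2 i k]
      · push_neg at hb
        refine ⟨-1, Or.inr rfl, by linarith, fun i => ?_⟩
        nlinarith [h1 i]
    -- approach q along q + (t * s * pb) • p for t > 0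
    set pb := nInf ⬝ᵥ p with hpbdef
    have hpb2 : 0 < pb * pb := mul_self_pos.mpr hpb
    have htend : Filter.Tendsto (fun t : ℝ => q + (t * s * pb) • p)
        (nhdsWithin 0 (Set.Ioi 0)) (nhds q) := by
      have hc : Continuous (fun t : ℝ => q + (t * s * pb) • p) :=
        continuous_const.add
          (((continuous_id.mul continuous_const).mul continuous_const).smul continuous_const)
      have := (hc.tendsto 0).mono_left (nhdsWithin_le_nhds (s := Set.Ioi 0))
      simpa using this
    refine mem_closure_of_tendsto htend ?_
    filter_upwards [self_mem_nhdsWithin] with t ht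
    have ht : 0 < t := ht
    have hdota : ∀ i, principalRay (A i) ⬝ᵥ (q + (t * s * pb) • p) =
        principalRay (A i) ⬝ᵥ q + (t * s * pb) * (principalRay (A i) ⬝ᵥ p) := by
      intro i
      simp [dotProduct_add, dotProduct_smul, smul_eq_mul]
    have hdotb : nInf ⬝ᵥ (q + (t * s * pb) • p) = b + (t * s * pb) * pb := by
      simp [dotProduct_add, dotProduct_smul, smul_eq_mul, hbdef, hpbdef]
    constructor
    · rw [hdotb]
      rcases hs with rfl | rfl
      · have : 0 < b + t * 1 * pb * pb := by nlinarith
        intro h; rw [h] at this; exact lt_irrefl 0 this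
      · have : b + t * (-1) * pb * pb < 0 := by nlinarith
        intro h; rw [h] at this; exact lt_irrefl 0 this
    · intro i
      rw [hdota i, hdotb]
      have hppos := hp i
      have hsai := hsa i
      rcases hs with rfl | rfl
      · have f1 : 0 < principalRay (A i) ⬝ᵥ q + t * 1 * pb * (principalRay (A i) ⬝ᵥ p) := by
          nlinarith
        have f2 : 0 < b + t * 1 * pb * pb := by nlinarith
        exact mul_pos f1 f2
      · have f1 : principalRay (A i) ⬝ᵥ q + t * (-1) * pb * (principalRay (A i) ⬝ᵥ p) < 0 := by
          nlinarith
        have f2 : b + t * (-1) * pb * pb < 0 := by nlinarith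
        exact mul_pos_of_neg_of_neg f1 f2
end
end

section
/- Let 𝒜 = {A₁,…,A_m} be an arrangement of finite cameras with principal rays n₁,…,n_m. Then the chiral domain D_𝒜 is nonempty if and only if there exists q ∈ ℝ⁴ with n_iᵀq > 0 for all i = 1,…,m and n_∞ᵀq > 0; equivalently, if and only if the row space of the 4×(m+1) matrix N with columns n₁,…,n_m, n_∞ intersects the open positive orthant of ℝ^{m+1}. -/
open Matrix

noncomputable section

/-- The 4x(m+1) matrix `N` whose columns are the principal rays `n₁, …, n_m` and `n_∞`. -/
def Nmat {m : ℕ} (A : Fin m → Matrix (Fin 3) (Fin 4) ℝ) :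
    Matrix (Fin 4) (Fin (m + 1)) ℝ :=
  Matrix.of fun r l => Fin.lastCases (nInf r) (fun i => principalRay (A i) r) l

lemma vecMul_Nmat {m : ℕ} (A : Fin m → Matrix (Fin 3) (Fin 4) ℝ) (q : Fin 4 → ℝ)
    (l : Fin (m + 1)) :
    Matrix.vecMul q (Nmat A) l =
      Fin.lastCases (nInf ⬝ᵥ q) (fun i => principalRay (A i) ⬝ᵥ q) l := by
  induction l using Fin.lastCases with
  | last =>
      simp [Matrix.vecMul, dotProduct, Nmat, mul_comm]
  | cast i =>
      simp [Matrix.vecMul, dotProduct, Nmat, mul_comm]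

/-- The chiral domain is nonempty iff there is `q ∈ ℝ⁴` with `n_iᵀq > 0` for
all `i` and `n_∞ᵀq > 0`; equivalently, iff the row space of `N = [n₁ ⋯ n_m n_∞]`
meets the open positive orthant of `ℝ^(m+1)`. -/
theorem chiralDomain_nonempty_iff {m : ℕ}
    (A : Fin m → Matrix (Fin 3) (Fin 4) ℝ)
    (hfin : ∀ i, FiniteCam (A i)) :
    ((chiralDomain A).Nonempty ↔
      ∃ q : Fin 4 → ℝ, (∀ i, 0 < principalRay (A i) ⬝ᵥ q) ∧ 0 < nInf ⬝ᵥ q) ∧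
    ((chiralDomain A).Nonempty ↔
      ∃ q : Fin 4 → ℝ, ∀ l : Fin (m + 1), 0 < Matrix.vecMul q (Nmat A) l) := by
  have h1 : (chiralDomain A).Nonempty ↔
      ∃ q : Fin 4 → ℝ, (∀ i, 0 < principalRay (A i) ⬝ᵥ q) ∧ 0 < nInf ⬝ᵥ q := by
    constructor
    · rintro ⟨q, hq, -⟩
      -- closure nonempty → the set itself nonempty
      have hS : {q : Fin 4 → ℝ | nInf ⬝ᵥ q ≠ 0 ∧
          ∀ i, 0 < (principalRay (A i) ⬝ᵥ q) * (nInf ⬝ᵥ q)}.Nonempty := by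
        by_contra h
        rw [Set.not_nonempty_iff_eq_empty] at h
        rw [h, closure_empty] at hq
        exact hq
      obtain ⟨p, hp0, hp⟩ := hS
      rcases hp0.lt_or_gt with hneg | hpos
      · refine ⟨-p, fun i => ?_, ?_⟩
        · have := hp i
          have h2 : 0 < (principalRay (A i) ⬝ᵥ -p) * (nInf ⬝ᵥ -p) := by
            simpa [dotProduct_neg] using this
          have h3 : 0 < nInf ⬝ᵥ -p := by simpa [dotProduct_neg] using hneg
          exact (mul_pos_iff.mp h2) |>.elim (fun h => h.1)
            (fun h => absurd h3 (not_lt.mpr h.2.le))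
        · simpa [dotProduct_neg] using hneg
      · refine ⟨p, fun i => ?_, hpos⟩
        have := hp i
        exact (mul_pos_iff.mp this) |>.elim (fun h => h.1)
          (fun h => absurd hpos (not_lt.mpr h.2.le))
    · rintro ⟨q, hq, hq0⟩
      refine ⟨q, subset_closure ⟨ne_of_gt hq0, fun i => mul_pos (hq i) hq0⟩, ?_⟩
      intro h
      rw [h] at hq0
      simp at hq0
  refine ⟨h1, h1.trans ?_⟩
  constructor
  · rintro ⟨q, hq, hq0⟩
    refine ⟨q, fun l => ?_⟩
    rw [vecMul_Nmat]
    induction l using Fin.lastCases with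
    | last => simpa using hq0
    | cast i => simpa using hq i
  · rintro ⟨q, hq⟩
    refine ⟨q, fun i => ?_, ?_⟩
    · have := hq (Fin.castSucc i); rw [vecMul_Nmat] at this; simpa using this
    · have := hq (Fin.last m); rw [vecMul_Nmat] at this; simpa using this
end
end

section
/- Let 𝒜 = {A₁,…,A_m} be an arrangement of finite cameras with distinct centers. Then for every j, every point of E_j lies in the Euclidean closure of the joint image J_𝒜 in (ℙ²)^m; consequently E_𝒜 is contained in the closure of J_𝒜. (Explicitly: for p = (e_{1j},…,p_j,…,e_{mj}) ∈ E_j, the curve v(s) = (s·G_j⁻¹p_j, 0) + c_j satisfies φ_𝒜(v(s)) → p as s → 0.) -/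
open Matrix

noncomputable section

/-- The joint image `J_𝒜` (at the level of representatives): tuples of nonzero vectors
representing `(A₁ q, …, A_m q)` for some `q ∈ ℙ³` that is not a camera center. -/
def jointImage {m : ℕ} (A : Fin m → Matrix (Fin 3) (Fin 4) ℝ) :
    Set (Fin m → Fin 3 → ℝ) :=
  {p | (∀ i, p i ≠ 0) ∧
    ∃ q : Fin 4 → ℝ, q ≠ 0 ∧ ∀ i, ∃ c : ℝ, c ≠ 0 ∧ p i = c • (A i *ᵥ q)}

/-- The chiral joint image `X_𝒜 = φ_𝒜(D_𝒜)` (at the level of representatives). -/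
def chiralJointImage {m : ℕ} (A : Fin m → Matrix (Fin 3) (Fin 4) ℝ) :
    Set (Fin m → Fin 3 → ℝ) :=
  {p | (∀ i, p i ≠ 0) ∧
    ∃ q ∈ chiralDomain A, ∀ i, ∃ c : ℝ, c ≠ 0 ∧ p i = c • (A i *ᵥ q)}

/-- `a_i = G_i⁻¹ p_i`. -/
def aVec (A : Matrix (Fin 3) (Fin 4) ℝ) (p : Fin 3 → ℝ) : Fin 3 → ℝ :=
  (leftBlock A)⁻¹ *ᵥ p

/-- `b_ij = G_i⁻¹ t_i - G_j⁻¹ t_j`. -/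
def bVec (A B : Matrix (Fin 3) (Fin 4) ℝ) : Fin 3 → ℝ :=
  (leftBlock A)⁻¹ *ᵥ tCol A - (leftBlock B)⁻¹ *ᵥ tCol B

/-- The chirality constraint set `C_𝒜`, cut out by the biquadratic inequalities
`det(G_i)·p_{i3}·((a_i × a_j)ᵀ(b_ij × a_j)) ≥ 0` and
`det(G_i)·det(G_j)·p_{i3}·p_{j3}·((b_ij × a_i)ᵀ(b_ij × a_j)) ≥ 0` for all `i, j`. -/
def CSet {m : ℕ} (A : Fin m → Matrix (Fin 3) (Fin 4) ℝ) :
    Set (Fin m → Fin 3 → ℝ) :=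
  {p | ∀ i j,
    0 ≤ (leftBlock (A i)).det * p i 2 *
        ((aVec (A i) (p i) ⨯₃ aVec (A j) (p j)) ⬝ᵥ (bVec (A i) (A j) ⨯₃ aVec (A j) (p j))) ∧
    0 ≤ (leftBlock (A i)).det * (leftBlock (A j)).det * p i 2 * p j 2 *
        ((bVec (A i) (A j) ⨯₃ aVec (A i) (p i)) ⬝ᵥ (bVec (A i) (A j) ⨯₃ aVec (A j) (p j)))}

/-- `E_j`: tuples whose `i`-th coordinate, for `i ≠ j`, represents the epipole
`e_ij = A_i c_j`, with free `j`-th coordinate. -/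
def Eset {m : ℕ} (A : Fin m → Matrix (Fin 3) (Fin 4) ℝ) (j : Fin m) :
    Set (Fin m → Fin 3 → ℝ) :=
  {p | (∀ i, p i ≠ 0) ∧ ∀ i, i ≠ j → ∃ c : ℝ, c ≠ 0 ∧ p i = c • (A i *ᵥ camCenter (A j))}

/-! Approach the center `c_j` along the line `c_j + s • w`, where `A_j w = p_j`. Camera `j` sees
`s • p_j`, i.e. the point `p_j` for every `s ≠ 0`, while camera `i ≠ j` sees
`A_i c_j + s • A_i w`, which tends to the epipole `e_ij`. Rescaling each image, the joint images
move affinely in `s` and reach `p` at `s = 0`. -/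

open Filter Topology

lemma mulVec_snoc (A : Matrix (Fin 3) (Fin 4) ℝ) (x : Fin 3 → ℝ) (r : ℝ) :
    A *ᵥ Fin.snoc x r = leftBlock A *ᵥ x + r • tCol A := by
  funext i
  simp only [mulVec, dotProduct, Fin.sum_univ_castSucc, Fin.snoc_castSucc, Fin.snoc_last,
    leftBlock, tCol, of_apply, Pi.add_apply, Pi.smul_apply, smul_eq_mul, mul_comm r]
  rfl

lemma camCenter_ne_zero (A : Matrix (Fin 3) (Fin 4) ℝ) : camCenter A ≠ 0 := fun h =>
  one_ne_zero ((Fin.snoc_last (α := fun _ => ℝ) _ _).symm.trans (congrFun h (Fin.last 3)))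

namespace FiniteCam

variable {A : Matrix (Fin 3) (Fin 4) ℝ}

lemma mulVec_camCenter (hA : FiniteCam A) : A *ᵥ camCenter A = 0 := by
  rw [camCenter, mulVec_snoc, mulVec_neg, mulVec_mulVec,
    mul_nonsing_inv _ (isUnit_iff_ne_zero.mpr hA), one_mulVec, one_smul, neg_add_cancel]

lemma mulVec_surjective (hA : FiniteCam A) : Function.Surjective (A *ᵥ ·) := fun p =>
  ⟨Fin.snoc ((leftBlock A)⁻¹ *ᵥ p) 0, by
    dsimp only
    rw [mulVec_snoc, mulVec_mulVec, mul_nonsing_inv _ (isUnit_iff_ne_zero.mpr hA), one_mulVec,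
      zero_smul, add_zero]⟩

end FiniteCam

section

variable {m : ℕ} {A : Fin m → Matrix (Fin 3) (Fin 4) ℝ} {j : Fin m} {q₀ w : Fin 4 → ℝ}
  {p : Fin m → Fin 3 → ℝ}

lemma add_smul_update_mem_jointImage {c : Fin m → ℝ} (hker : A j *ᵥ q₀ = 0)
    (hw : A j *ᵥ w = p j) (hc0 : ∀ i, c i ≠ 0) (hc : ∀ i, i ≠ j → p i = c i • (A i *ᵥ q₀))
    {s : ℝ} (hs : s ≠ 0) (hq : q₀ + s • w ≠ 0)
    (hne : ∀ i, (p + s • Function.update (fun i => c i • (A i *ᵥ w)) j 0) i ≠ 0) :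
    p + s • Function.update (fun i => c i • (A i *ᵥ w)) j 0 ∈ jointImage A := by
  refine ⟨hne, q₀ + s • w, hq, fun i => ?_⟩
  rcases eq_or_ne i j with rfl | hij
  · exact ⟨s⁻¹, inv_ne_zero hs, by simp [mulVec_add, mulVec_smul, hker, hw, smul_smul, hs]⟩
  · refine ⟨c i, hc0 i, ?_⟩
    simp [Function.update_of_ne hij, mulVec_add, mulVec_smul, hc i hij, smul_smul, mul_comm]

theorem mem_closure_jointImage_of_mulVec_eq_zero (hq₀ : q₀ ≠ 0) (hker : A j *ᵥ q₀ = 0)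
    (hw : A j *ᵥ w = p j) (hp0 : ∀ i, p i ≠ 0)
    (hp : ∀ i, i ≠ j → ∃ c : ℝ, c ≠ 0 ∧ p i = c • (A i *ᵥ q₀)) :
    p ∈ closure (jointImage A) := by
  have hscale : ∀ i, ∃ c : ℝ, c ≠ 0 ∧ (i ≠ j → p i = c • (A i *ᵥ q₀)) := fun i => by
    by_cases hij : i = j
    · exact ⟨1, one_ne_zero, fun h => absurd hij h⟩
    · obtain ⟨c, hc0, hc⟩ := hp i hij
      exact ⟨c, hc0, fun _ => hc⟩
  choose c hc0 hc using hscale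
  set u := Function.update (fun i => c i • (A i *ᵥ w)) j 0
  have hcurve : Continuous fun s : ℝ => p + s • u := by fun_prop
  have hline : Continuous fun s : ℝ => q₀ + s • w := by fun_prop
  have hq : ∀ᶠ s in 𝓝 (0 : ℝ), q₀ + s • w ≠ 0 :=
    hline.continuousAt.eventually_ne (by simpa using hq₀)
  have hne : ∀ᶠ s in 𝓝 (0 : ℝ), ∀ i, (p + s • u) i ≠ 0 := eventually_all.2 fun i =>
    ((continuous_apply i).comp hcurve).continuousAt.eventually_ne (by simpa using hp0 i)
  have hmem : ∀ᶠ s in 𝓝[≠] (0 : ℝ), p + s • u ∈ jointImage A := by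
    filter_upwards [self_mem_nhdsWithin, nhdsWithin_le_nhds hq, nhdsWithin_le_nhds hne]
      with s hs hqs hnes
    exact add_smul_update_mem_jointImage hker hw hc0 hc hs hqs hnes
  have htend : Tendsto (fun s : ℝ => p + s • u) (𝓝[≠] 0) (𝓝 p) := by
    simpa using (hcurve.tendsto 0).mono_left nhdsWithin_le_nhds
  exact mem_closure_of_tendsto htend hmem

end

theorem Eset_subset_closure_jointImage_general {m : ℕ}
    (A : Fin m → Matrix (Fin 3) (Fin 4) ℝ)
    (hfin : ∀ i, FiniteCam (A i)) :
    (∀ j, Eset A j ⊆ closure (jointImage A)) ∧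
      (⋃ j, Eset A j) ⊆ closure (jointImage A) := by
  have hE : ∀ j, Eset A j ⊆ closure (jointImage A) := fun j p ⟨hp0, hp⟩ => by
    obtain ⟨w, hw⟩ := (hfin j).mulVec_surjective (p j)
    exact mem_closure_jointImage_of_mulVec_eq_zero (camCenter_ne_zero _)
      (hfin j).mulVec_camCenter hw hp0 hp
  exact ⟨hE, Set.iUnion_subset hE⟩

/-- For an arrangement of finite cameras with distinct centers, every point
of every `E_j` lies in the Euclidean closure of the joint image in `(ℙ²)^m` (expressed at
the level of representatives: elements of `E_j` are tuples of nonzero vectors, and they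
lie in the closure of the set of representatives of the joint image). -/
theorem Eset_subset_closure_jointImage {m : ℕ}
    (A : Fin m → Matrix (Fin 3) (Fin 4) ℝ)
    (hfin : ∀ i, FiniteCam (A i))
    (hdist : ∀ i j, i ≠ j → camCenter (A i) ≠ camCenter (A j)) :
    (∀ j, Eset A j ⊆ closure (jointImage A)) ∧
      (⋃ j, Eset A j) ⊆ closure (jointImage A) :=
  Eset_subset_closure_jointImage_general A hfin
end
end

section
/- Let 𝒜 = {A₁,…,A_m} be an arrangement of finite cameras with distinct collinear centers and nonempty chiral domain D_𝒜. Let e = (e₁,…,e_m) ∈ (ℙ²)^m be the common image under φ_𝒜 of the points of the common baseline other than the centers (whose coordinates are the epipoles). Then X_𝒜 ∖ {e} = (J_𝒜 ∩ C_𝒜) ∖ {e}, and the Euclidean closure of X_𝒜 in (ℙ²)^m is contained in C_𝒜. -/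
open Matrix

noncomputable section

/-!
Put `a_i = G_i⁻¹ A_i q`. Then `a_i - a_j = q₄ b_ij`, so at `p = φ(q)` the two expressions
defining `C_𝒜` become `(n_iᵀq) q₄ ‖b_ij × a_j‖²` and `(n_iᵀq) (n_jᵀq) ‖b_ij × a_j‖²`, where
`b_ij × a_j` vanishes only when `q` is on the baseline. Hence the inequalities hold at points
of positive depth, and by continuity on `X_𝒜` and its closure. Conversely, off the baseline
they force `q₄` and all depths `n_iᵀq` to share one sign; replacing `q` by `-q` makes them
nonnegative, and moving `q` slightly towards a point of positive depth shows `q ∈ D_𝒜`. On the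
baseline `q` is either a center, which `p_i ≠ 0` excludes, or is mapped to `e`.
-/

open Topology

lemma forall_nonneg_or_forall_nonpos_of_mul_nonneg {ι R : Type*} [Ring R] [LinearOrder R]
    [IsStrictOrderedRing R] {w : ι → R} (h : ∀ i j, 0 ≤ w i * w j) :
    (∀ i, 0 ≤ w i) ∨ (∀ i, w i ≤ 0) := by
  by_contra! ⟨⟨i, hi⟩, ⟨j, hj⟩⟩
  exact (h i j).not_gt (mul_neg_of_neg_of_pos hi hj)

lemma dotProduct_self_nonneg {n R : Type*} [Fintype n] [Ring R] [LinearOrder R]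
    [IsStrictOrderedRing R] (v : n → R) : 0 ≤ v ⬝ᵥ v :=
  Finset.sum_nonneg fun i _ => mul_self_nonneg (v i)

lemma dotProduct_self_pos {n R : Type*} [Fintype n] [Ring R] [LinearOrder R]
    [IsStrictOrderedRing R] {v : n → R} (hv : v ≠ 0) : 0 < v ⬝ᵥ v :=
  (dotProduct_self_nonneg v).lt_of_ne' (mt dotProduct_self_eq_zero.1 hv)

@[fun_prop]
lemma Continuous.crossProduct {X : Type*} [TopologicalSpace X] {f g : X → Fin 3 → ℝ}
    (hf : Continuous f) (hg : Continuous g) : Continuous fun x => f x ⨯₃ g x := by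
  simp only [cross_apply]
  fun_prop

section Camera

variable {A B : Matrix (Fin 3) (Fin 4) ℝ}

lemma nInf_dotProduct (q : Fin 4 → ℝ) : nInf ⬝ᵥ q = q 3 := by
  simp only [dotProduct, Fin.sum_univ_castSucc, nInf, Fin.snoc_castSucc, Pi.zero_apply, zero_mul,
    Finset.sum_const_zero, zero_add]
  exact one_mul _

lemma principalRay_dotProduct (A : Matrix (Fin 3) (Fin 4) ℝ) (q : Fin 4 → ℝ) :
    principalRay A ⬝ᵥ q = (leftBlock A).det * (A *ᵥ q) 2 := by
  rw [principalRay, smul_dotProduct, smul_eq_mul]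
  rfl

lemma camCenter_last (A : Matrix (Fin 3) (Fin 4) ℝ) : camCenter A 3 = 1 :=
  Fin.snoc_last (α := fun _ => ℝ) _ _

lemma mulVec_eq_leftBlock_mulVec_add (A : Matrix (Fin 3) (Fin 4) ℝ) (q : Fin 4 → ℝ) :
    A *ᵥ q = leftBlock A *ᵥ Fin.init q + q 3 • tCol A := by
  ext i
  simp [mulVec, dotProduct, Fin.sum_univ_castSucc, leftBlock, tCol, Fin.init, mul_comm]

lemma aVec_mulVec (hA : FiniteCam A) (q : Fin 4 → ℝ) :
    aVec A (A *ᵥ q) = Fin.init q + q 3 • ((leftBlock A)⁻¹ *ᵥ tCol A) := by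
  rw [aVec, mulVec_eq_leftBlock_mulVec_add, mulVec_add, mulVec_smul, mulVec_mulVec,
    nonsing_inv_mul _ (isUnit_iff_ne_zero.mpr hA), one_mulVec]

lemma mulVec_camCenter (hA : FiniteCam A) : A *ᵥ camCenter A = 0 := by
  rw [mulVec_eq_leftBlock_mulVec_add, camCenter_last, one_smul, camCenter, Fin.init_snoc,
    mulVec_neg, mulVec_mulVec, mul_nonsing_inv _ (isUnit_iff_ne_zero.mpr hA), one_mulVec,
    neg_add_cancel]

lemma aVec_mulVec_sub_aVec_mulVec (hA : FiniteCam A) (hB : FiniteCam B) (q : Fin 4 → ℝ) :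
    aVec A (A *ᵥ q) - aVec B (B *ᵥ q) = q 3 • bVec A B := by
  rw [aVec_mulVec hA, aVec_mulVec hB, bVec, smul_sub]
  abel

lemma bVec_ne_zero (h : camCenter A ≠ camCenter B) : bVec A B ≠ 0 := by
  intro hb
  rw [bVec, sub_eq_zero] at hb
  exact h (by rw [camCenter, camCenter, hb])

lemma mem_span_camCenter_of_aVec_mulVec_eq_smul (hB : FiniteCam B) {q : Fin 4 → ℝ} {α : ℝ}
    (h : aVec B (B *ᵥ q) = α • bVec A B) :
    q ∈ Submodule.span ℝ {camCenter A, camCenter B} := by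
  refine Submodule.mem_span_pair.mpr ⟨-α, α + q 3, ?_⟩
  ext k
  induction k using Fin.lastCases with
  | last => simp [camCenter_last]
  | cast k =>
    have hk := congrFun h k
    simp only [aVec_mulVec hB, bVec, Pi.add_apply, Pi.smul_apply, Pi.sub_apply,
      smul_eq_mul, Fin.init] at hk
    simp only [camCenter, Pi.add_apply, Pi.smul_apply, Fin.snoc_castSucc, Pi.neg_apply,
      smul_eq_mul]
    linarith

/-- Normal of the plane through the two camera centers and `q`. -/
def epipolarNormal (A B : Matrix (Fin 3) (Fin 4) ℝ) (q : Fin 4 → ℝ) : Fin 3 → ℝ :=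
  bVec A B ⨯₃ aVec B (B *ᵥ q)

lemma epipolarNormal_ne_zero (hB : FiniteCam B) (hAB : camCenter A ≠ camCenter B)
    {q : Fin 4 → ℝ} (hq : q ∉ Submodule.span ℝ {camCenter A, camCenter B}) :
    epipolarNormal A B q ≠ 0 := by
  rw [epipolarNormal, crossProduct_ne_zero_iff_linearIndependent,
    LinearIndependent.pair_iff' (bVec_ne_zero hAB)]
  exact fun α h => hq (mem_span_camCenter_of_aVec_mulVec_eq_smul hB h.symm)

end Camera

section ChiralForms

variable {A B : Matrix (Fin 3) (Fin 4) ℝ}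

def chiralForm₁ (A B : Matrix (Fin 3) (Fin 4) ℝ) (u v : Fin 3 → ℝ) : ℝ :=
  (leftBlock A).det * u 2 * ((aVec A u ⨯₃ aVec B v) ⬝ᵥ (bVec A B ⨯₃ aVec B v))

def chiralForm₂ (A B : Matrix (Fin 3) (Fin 4) ℝ) (u v : Fin 3 → ℝ) : ℝ :=
  (leftBlock A).det * (leftBlock B).det * u 2 * v 2 *
    ((bVec A B ⨯₃ aVec A u) ⬝ᵥ (bVec A B ⨯₃ aVec B v))

lemma mem_CSet_iff {m : ℕ} {A : Fin m → Matrix (Fin 3) (Fin 4) ℝ} {p : Fin m → Fin 3 → ℝ} :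
    p ∈ CSet A ↔ ∀ i j, 0 ≤ chiralForm₁ (A i) (A j) (p i) (p j) ∧
      0 ≤ chiralForm₂ (A i) (A j) (p i) (p j) :=
  Iff.rfl

lemma aVec_smul (A : Matrix (Fin 3) (Fin 4) ℝ) (c : ℝ) (u : Fin 3 → ℝ) :
    aVec A (c • u) = c • aVec A u :=
  mulVec_smul _ c u

lemma chiralForm₁_smul_smul (c d : ℝ) (u v : Fin 3 → ℝ) :
    chiralForm₁ A B (c • u) (d • v) = (c * d) ^ 2 * chiralForm₁ A B u v := by
  simp only [chiralForm₁, aVec_smul, map_smul, LinearMap.smul_apply, smul_dotProduct,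
    dotProduct_smul, Pi.smul_apply, smul_eq_mul]
  ring

lemma chiralForm₂_smul_smul (c d : ℝ) (u v : Fin 3 → ℝ) :
    chiralForm₂ A B (c • u) (d • v) = (c * d) ^ 2 * chiralForm₂ A B u v := by
  simp only [chiralForm₂, aVec_smul, map_smul, smul_dotProduct, dotProduct_smul, Pi.smul_apply,
    smul_eq_mul]
  ring

lemma mem_CSet_iff_of_smul {m : ℕ} {A : Fin m → Matrix (Fin 3) (Fin 4) ℝ}
    {p v : Fin m → Fin 3 → ℝ} (h : ∀ i, ∃ c : ℝ, c ≠ 0 ∧ p i = c • v i) :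
    p ∈ CSet A ↔ v ∈ CSet A := by
  choose c hc hp using h
  obtain rfl : p = fun i => c i • v i := funext hp
  have hpos : ∀ i j, 0 < (c i * c j) ^ 2 := fun i j => by
    have := mul_ne_zero (hc i) (hc j)
    positivity
  simp only [mem_CSet_iff, chiralForm₁_smul_smul, chiralForm₂_smul_smul,
    mul_nonneg_iff_of_pos_left (hpos _ _)]

lemma chiralForm₁_mulVec (hA : FiniteCam A) (hB : FiniteCam B) (q : Fin 4 → ℝ) :
    chiralForm₁ A B (A *ᵥ q) (B *ᵥ q) = (principalRay A ⬝ᵥ q) * (nInf ⬝ᵥ q) *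
      (epipolarNormal A B q ⬝ᵥ epipolarNormal A B q) := by
  rw [chiralForm₁, principalRay_dotProduct, nInf_dotProduct, epipolarNormal,
    eq_add_of_sub_eq (aVec_mulVec_sub_aVec_mulVec hA hB q)]
  simp only [map_add, map_smul, LinearMap.add_apply, LinearMap.smul_apply, cross_self,
    add_zero, smul_dotProduct, smul_eq_mul]
  ring

lemma chiralForm₂_mulVec (hA : FiniteCam A) (hB : FiniteCam B) (q : Fin 4 → ℝ) :
    chiralForm₂ A B (A *ᵥ q) (B *ᵥ q) = (principalRay A ⬝ᵥ q) * (principalRay B ⬝ᵥ q) *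
      (epipolarNormal A B q ⬝ᵥ epipolarNormal A B q) := by
  rw [chiralForm₂, principalRay_dotProduct, principalRay_dotProduct, epipolarNormal,
    eq_add_of_sub_eq (aVec_mulVec_sub_aVec_mulVec hA hB q)]
  simp only [map_add, map_smul, cross_self, smul_zero, zero_add]
  ring

lemma isClosed_CSet {m : ℕ} (A : Fin m → Matrix (Fin 3) (Fin 4) ℝ) : IsClosed (CSet A) := by
  simp only [CSet, Set.ofPred_forall, Set.ofPred_and]
  exact isClosed_iInter fun i => isClosed_iInter fun j =>
    (isClosed_le (by fun_prop) (by simp only [aVec]; fun_prop)).inter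
      (isClosed_le (by fun_prop) (by simp only [aVec]; fun_prop))

end ChiralForms

section PositiveDepth

variable {m : ℕ} {A : Fin m → Matrix (Fin 3) (Fin 4) ℝ}

def positiveDepthSet (A : Fin m → Matrix (Fin 3) (Fin 4) ℝ) : Set (Fin 4 → ℝ) :=
  {q | nInf ⬝ᵥ q ≠ 0 ∧ ∀ i, 0 < (principalRay (A i) ⬝ᵥ q) * (nInf ⬝ᵥ q)}

lemma neg_mem_closure_positiveDepthSet {q : Fin 4 → ℝ} :
    -q ∈ closure (positiveDepthSet A) ↔ q ∈ closure (positiveDepthSet A) := by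
  have hneg : -positiveDepthSet A = positiveDepthSet A := by
    ext q
    simp [positiveDepthSet, dotProduct_neg]
  rw [← Set.mem_neg, neg_closure, hneg]

lemma mem_closure_positiveDepthSet_of_nonneg (hS : (positiveDepthSet A).Nonempty)
    {q : Fin 4 → ℝ} (hdepth : ∀ i, 0 ≤ principalRay (A i) ⬝ᵥ q) (hinf : 0 ≤ nInf ⬝ᵥ q) :
    q ∈ closure (positiveDepthSet A) := by
  obtain ⟨r, hr0, hr⟩ : ∃ r, 0 < nInf ⬝ᵥ r ∧ ∀ i, 0 < principalRay (A i) ⬝ᵥ r := by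
    obtain ⟨r, hr0, hr⟩ := hS
    rcases hr0.lt_or_gt with hneg | hpos
    · exact ⟨-r, by simpa [dotProduct_neg] using hneg,
        fun i => by simpa [dotProduct_neg] using neg_of_mul_pos_left (hr i) hneg.le⟩
    · exact ⟨r, hpos, fun i => pos_of_mul_pos_left (hr i) hpos.le⟩
  have hlim : Filter.Tendsto (fun s : ℝ => q + s • r) (𝓝[>] 0) (𝓝 q) := by
    have : Continuous fun s : ℝ => q + s • r := by fun_prop
    simpa using (this.tendsto 0).mono_left nhdsWithin_le_nhds
  refine mem_closure_of_tendsto hlim (eventually_nhdsWithin_of_forall fun s (hs : 0 < s) => ?_)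
  have hinf' : 0 < nInf ⬝ᵥ (q + s • r) := by
    rw [dotProduct_add, dotProduct_smul, smul_eq_mul]
    positivity
  refine ⟨hinf'.ne', fun i => mul_pos ?_ hinf'⟩
  rw [dotProduct_add, dotProduct_smul, smul_eq_mul]
  have := hr i
  have := hdepth i
  positivity

lemma mem_closure_positiveDepthSet_of_mul_nonneg (hS : (positiveDepthSet A).Nonempty)
    {q : Fin 4 → ℝ} (hinf : ∀ i, 0 ≤ (principalRay (A i) ⬝ᵥ q) * (nInf ⬝ᵥ q))
    (hpair : ∀ i j, 0 ≤ (principalRay (A i) ⬝ᵥ q) * (principalRay (A j) ⬝ᵥ q)) :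
    q ∈ closure (positiveDepthSet A) := by
  set w : Option (Fin m) → ℝ := fun o => o.elim (nInf ⬝ᵥ q) fun i => principalRay (A i) ⬝ᵥ q
  have hw : ∀ o o', 0 ≤ w o * w o' := by
    rintro (_ | i) (_ | j)
    exacts [mul_self_nonneg _, mul_comm (w none) _ ▸ hinf j, hinf i, hpair i j]
  rcases forall_nonneg_or_forall_nonpos_of_mul_nonneg hw with hw | hw
  · exact mem_closure_positiveDepthSet_of_nonneg hS (fun i => hw (some i)) (hw none)
  · refine neg_mem_closure_positiveDepthSet.1 (mem_closure_positiveDepthSet_of_nonneg hS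
      (fun i => ?_) ?_)
    · rw [dotProduct_neg]
      exact neg_nonneg.2 (hw (some i))
    · rw [dotProduct_neg]
      exact neg_nonneg.2 (hw none)

lemma mulVec_mem_CSet_of_mem_closure (hfin : ∀ i, FiniteCam (A i)) {q : Fin 4 → ℝ}
    (hq : q ∈ closure (positiveDepthSet A)) : (fun i => A i *ᵥ q) ∈ CSet A := by
  suffices h : positiveDepthSet A ⊆ (fun q i => A i *ᵥ q) ⁻¹' CSet A from
    closure_minimal h ((isClosed_CSet A).preimage (by fun_prop)) hq
  rintro q ⟨-, hdepth⟩
  refine mem_CSet_iff.2 fun i j => ?_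
  rw [chiralForm₁_mulVec (hfin i) (hfin j), chiralForm₂_mulVec (hfin i) (hfin j)]
  have hpair : 0 ≤ (principalRay (A i) ⬝ᵥ q) * (principalRay (A j) ⬝ᵥ q) := by
    refine (pos_of_mul_pos_left (b := (nInf ⬝ᵥ q) * (nInf ⬝ᵥ q)) ?_ (mul_self_nonneg _)).le
    convert mul_pos (hdepth i) (hdepth j) using 1
    ring
  exact ⟨mul_nonneg (hdepth i).le (dotProduct_self_nonneg _),
    mul_nonneg hpair (dotProduct_self_nonneg _)⟩

lemma chiralJointImage_subset_jointImage : chiralJointImage A ⊆ jointImage A :=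
  fun _ ⟨hp0, q, hq, hrep⟩ => ⟨hp0, q, hq.2, hrep⟩

lemma chiralJointImage_subset_CSet (hfin : ∀ i, FiniteCam (A i)) :
    chiralJointImage A ⊆ CSet A := by
  rintro p ⟨-, q, ⟨hq, -⟩, hrep⟩
  exact (mem_CSet_iff_of_smul hrep).2 (mulVec_mem_CSet_of_mem_closure hfin hq)

lemma mem_closure_positiveDepthSet_of_mulVec_mem_CSet [Nontrivial (Fin m)]
    (hfin : ∀ i, FiniteCam (A i)) (hdist : ∀ i j, i ≠ j → camCenter (A i) ≠ camCenter (A j))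
    (hS : (positiveDepthSet A).Nonempty) {q : Fin 4 → ℝ}
    (hC : (fun i => A i *ᵥ q) ∈ CSet A)
    (hq : q ∉ Submodule.span ℝ (Set.range fun i => camCenter (A i))) :
    q ∈ closure (positiveDepthSet A) := by
  have hnormal : ∀ i j, i ≠ j →
      0 < epipolarNormal (A i) (A j) q ⬝ᵥ epipolarNormal (A i) (A j) q := fun i j hij =>
    dotProduct_self_pos (epipolarNormal_ne_zero (hfin j) (hdist i j hij) fun h =>
      hq (Submodule.span_mono (Set.pair_subset (Set.mem_range_self i) (Set.mem_range_self j)) h))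
  refine mem_closure_positiveDepthSet_of_mul_nonneg hS (fun i => ?_) (fun i j => ?_)
  · obtain ⟨j, hji⟩ := exists_ne i
    have h : 0 ≤ chiralForm₁ (A i) (A j) (A i *ᵥ q) (A j *ᵥ q) := (hC i j).1
    rw [chiralForm₁_mulVec (hfin i) (hfin j)] at h
    exact nonneg_of_mul_nonneg_left h (hnormal i j hji.symm)
  · rcases eq_or_ne i j with rfl | hij
    · exact mul_self_nonneg _
    have h : 0 ≤ chiralForm₂ (A i) (A j) (A i *ᵥ q) (A j *ᵥ q) := (hC i j).2
    rw [chiralForm₂_mulVec (hfin i) (hfin j)] at h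
    exact nonneg_of_mul_nonneg_left h (hnormal i j hij)

end PositiveDepth

theorem chiralJointImage_eq_of_collinear_general {m : ℕ} (hm : 2 ≤ m)
    (A : Fin m → Matrix (Fin 3) (Fin 4) ℝ)
    (hfin : ∀ i, FiniteCam (A i))
    (hdist : ∀ i j, i ≠ j → camCenter (A i) ≠ camCenter (A j))
    (hne : (chiralDomain A).Nonempty)
    (e : Fin m → Fin 3 → ℝ)
    (he : ∀ q : Fin 4 → ℝ, q ≠ 0 →
      q ∈ Submodule.span ℝ (Set.range fun i => camCenter (A i)) →
      (∀ j, ¬ ∃ c : ℝ, q = c • camCenter (A j)) →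
      ∀ i, ∃ c : ℝ, c ≠ 0 ∧ A i *ᵥ q = c • e i) :
    chiralJointImage A \ {p | ∀ i, ∃ c : ℝ, c ≠ 0 ∧ p i = c • e i}
        = (jointImage A ∩ CSet A) \ {p | ∀ i, ∃ c : ℝ, c ≠ 0 ∧ p i = c • e i} ∧
      closure (chiralJointImage A) ∩ {p | ∀ i, p i ≠ 0} ⊆ CSet A := by
  have := Fin.nontrivial_iff_two_le.2 hm
  have hXC := chiralJointImage_subset_CSet hfin
  refine ⟨Set.Subset.antisymm ?_ ?_, fun p hp => closure_minimal hXC (isClosed_CSet A) hp.1⟩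
  · exact Set.sdiff_subset_sdiff_left fun p hp => ⟨chiralJointImage_subset_jointImage hp, hXC hp⟩
  rintro p ⟨⟨⟨hp0, q, hq0, hrep⟩, hC⟩, hpe⟩
  by_cases hq : q ∈ Submodule.span ℝ (Set.range fun i => camCenter (A i))
  · refine absurd (fun i => ?_) hpe
    have hcenter : ∀ j, ¬ ∃ c : ℝ, q = c • camCenter (A j) := by
      rintro j ⟨c, rfl⟩
      obtain ⟨d, -, hpj⟩ := hrep j
      exact hp0 j (by rw [hpj, mulVec_smul, mulVec_camCenter (hfin j), smul_zero, smul_zero])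
    obtain ⟨c, hc, hqe⟩ := he q hq0 hq hcenter i
    obtain ⟨d, hd, hpi⟩ := hrep i
    exact ⟨d * c, mul_ne_zero hd hc, by rw [hpi, hqe, smul_smul]⟩
  have hS : (positiveDepthSet A).Nonempty := closure_nonempty_iff.1 (hne.mono fun _ h => h.1)
  exact ⟨⟨hp0, q, ⟨mem_closure_positiveDepthSet_of_mulVec_mem_CSet hfin hdist hS
    ((mem_CSet_iff_of_smul hrep).1 hC) hq, hq0⟩, hrep⟩, hpe⟩

/-- collinear-center case. If the distinct centers are collinear, `D_𝒜 ≠ ∅`,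
and `e = (e₁,…,e_m)` is the common image under `φ_𝒜` of the points of the common baseline
other than the centers, then `X_𝒜 ∖ {e} = (J_𝒜 ∩ C_𝒜) ∖ {e}` and the Euclidean closure of
`X_𝒜` in `(ℙ²)^m` is contained in `C_𝒜` (all at the level of representatives). -/
theorem chiralJointImage_eq_of_collinear {m : ℕ} (hm : 2 ≤ m)
    (A : Fin m → Matrix (Fin 3) (Fin 4) ℝ)
    (hfin : ∀ i, FiniteCam (A i))
    (hdist : ∀ i j, i ≠ j → camCenter (A i) ≠ camCenter (A j))
    (hcol : Collinear ℝ (Set.range fun i => camCenter (A i)))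
    (hne : (chiralDomain A).Nonempty)
    (e : Fin m → Fin 3 → ℝ) (he0 : ∀ i, e i ≠ 0)
    (he : ∀ q : Fin 4 → ℝ, q ≠ 0 →
      q ∈ Submodule.span ℝ (Set.range fun i => camCenter (A i)) →
      (∀ j, ¬ ∃ c : ℝ, q = c • camCenter (A j)) →
      ∀ i, ∃ c : ℝ, c ≠ 0 ∧ A i *ᵥ q = c • e i) :
    chiralJointImage A \ {p | ∀ i, ∃ c : ℝ, c ≠ 0 ∧ p i = c • e i}
        = (jointImage A ∩ CSet A) \ {p | ∀ i, ∃ c : ℝ, c ≠ 0 ∧ p i = c • e i} ∧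
      closure (chiralJointImage A) ∩ {p | ∀ i, p i ≠ 0} ⊆ CSet A :=
  chiralJointImage_eq_of_collinear_general hm A hfin hdist hne e he
end
end

section
/- Let (𝒜, Q) be a projective reconstruction of point correspondences P, with σ_{ik} = sign(n_iᵀq_k). Suppose (𝒜, Q) is projectively equivalent to a chiral reconstruction of P, i.e., there exists H ∈ GL₄(ℝ) such that each A_iH⁻¹ is a finite camera and ({A_iH⁻¹}, {Hq_k}) is a chiral reconstruction of P. Then for each pair i, j, the product σ_{ik}·σ_{jk} is independent of k, and (𝒜, Q) can be signed: there exist signs ε_k ∈ {±1} such that (𝒜, {ε_k·q_k}) is a signed reconstruction of P. -/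
open Matrix

noncomputable section

/-- `(𝒜, Q)` is a projective reconstruction of the point correspondences `p`. -/
def IsProjRecon {m n : ℕ} (A : Fin m → Matrix (Fin 3) (Fin 4) ℝ)
    (q : Fin n → Fin 4 → ℝ) (p : Fin m → Fin n → Fin 2 → ℝ) : Prop :=
  (∀ i, FiniteCam (A i)) ∧ (∀ k, q k ≠ 0) ∧
    ∀ i k, ∃ w : ℝ, w ≠ 0 ∧ A i *ᵥ q k = w • (Fin.snoc (p i k) 1 : Fin 3 → ℝ)

/-- A chiral reconstruction: a projective reconstruction all of whose world points lie
in the chiral domain of the camera arrangement. -/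
def IsChiralRecon {m n : ℕ} (A : Fin m → Matrix (Fin 3) (Fin 4) ℝ)
    (q : Fin n → Fin 4 → ℝ) (p : Fin m → Fin n → Fin 2 → ℝ) : Prop :=
  IsProjRecon A q p ∧ ∀ k, q k ∈ chiralDomain A

/-- The cone of all nonnegative combinations of a finite family of vectors in `ℝ⁴`. -/
def coneHull {k : ℕ} (v : Fin k → Fin 4 → ℝ) : Set (Fin 4 → ℝ) :=
  {x | ∃ c : Fin k → ℝ, (∀ l, 0 ≤ c l) ∧ x = ∑ l, c l • v l}

/-- The dual cone `K* = {y : yᵀx ≥ 0 for all x ∈ K}`. -/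
def dualConeSet (S : Set (Fin 4 → ℝ)) : Set (Fin 4 → ℝ) :=
  {y | ∀ x ∈ S, 0 ≤ y ⬝ᵥ x}


private lemma signMulAux {x y : ℝ} (hx : x ≠ 0) (hy : y ≠ 0) :
    Real.sign (x*y) = Real.sign x * Real.sign y := by
  rcases hx.lt_or_gt with hx|hx <;> rcases hy.lt_or_gt with hy|hy
  · rw [Real.sign_of_pos (mul_pos_of_neg_of_neg hx hy), Real.sign_of_neg hx,
      Real.sign_of_neg hy]; ring
  · rw [Real.sign_of_neg (mul_neg_of_neg_of_pos hx hy), Real.sign_of_neg hx,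
      Real.sign_of_pos hy]; ring
  · rw [Real.sign_of_neg (mul_neg_of_pos_of_neg hx hy), Real.sign_of_pos hx,
      Real.sign_of_neg hy]; ring
  · rw [Real.sign_of_pos (mul_pos hx hy), Real.sign_of_pos hx, Real.sign_of_pos hy]; ring

private lemma signEqAux {x y : ℝ} (h : 0 < x*y) : Real.sign x = Real.sign y := by
  rcases lt_trichotomy x 0 with hx|hx|hx
  · have hy : y < 0 := by nlinarith
    rw [Real.sign_of_neg hx, Real.sign_of_neg hy]
  · subst hx; simp at h
  · have hy : 0 < y := by nlinarith
    rw [Real.sign_of_pos hx, Real.sign_of_pos hy]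

private lemma signPMAux {x : ℝ} (h : x ≠ 0) : Real.sign x = 1 ∨ Real.sign x = -1 := by
  rcases h.lt_or_gt with hx|hx
  · right; exact Real.sign_of_neg hx
  · left; exact Real.sign_of_pos hx

private lemma dotContAux (v : Fin 4 → ℝ) : Continuous fun q : Fin 4 → ℝ => v ⬝ᵥ q := by
  unfold dotProduct
  exact continuous_finset_sum _ fun x _ => continuous_const.mul (continuous_apply x)

/-- if a projective reconstruction is projectively equivalent to a chiral
reconstruction, then for each pair `i, j` the product `σ_ik σ_jk` does not depend on `k`,
and the reconstruction can be signed. -/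
theorem signed_of_projectively_equivalent_to_chiral {m n : ℕ}
    (A : Fin m → Matrix (Fin 3) (Fin 4) ℝ)
    (q : Fin n → Fin 4 → ℝ) (p : Fin m → Fin n → Fin 2 → ℝ)
    (hrec : IsProjRecon A q p)
    (H : Matrix (Fin 4) (Fin 4) ℝ) (hH : IsUnit H.det)
    (hchi : IsChiralRecon (fun i => A i * H⁻¹) (fun k => H *ᵥ q k) p) :
    (∀ i j k k',
      Real.sign (principalRay (A i) ⬝ᵥ q k) * Real.sign (principalRay (A j) ⬝ᵥ q k)
        = Real.sign (principalRay (A i) ⬝ᵥ q k') * Real.sign (principalRay (A j) ⬝ᵥ q k')) ∧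
    ∃ ε : Fin n → ℝ, (∀ k, ε k = 1 ∨ ε k = -1) ∧
      IsProjRecon A (fun k => ε k • q k) p ∧
      ∀ i, ∃ σ : ℝ, ∀ k, Real.sign (principalRay (A i) ⬝ᵥ (ε k • q k)) = σ := by
  obtain ⟨hfin, hq0, hw⟩ := hrec
  choose w hw0 hweq using hw
  obtain ⟨⟨hBfin, hr0, hBw⟩, hchir⟩ := hchi
  have hHinv : H⁻¹ * H = 1 := Matrix.nonsing_inv_mul H hH
  have hBmul : ∀ i k, (A i * H⁻¹) *ᵥ (H *ᵥ q k) = A i *ᵥ q k := by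
    intro i k
    have h : H⁻¹ *ᵥ (H *ᵥ q k) = q k := by
      rw [Matrix.mulVec_mulVec, hHinv, Matrix.one_mulVec]
    rw [← Matrix.mulVec_mulVec, h]
  have hrowA : ∀ i k, A i 2 ⬝ᵥ q k = w i k := by
    intro i k
    have h : A i 2 ⬝ᵥ q k = (w i k • (Fin.snoc (p i k) 1 : Fin 3 → ℝ)) 2 :=
      congrFun (hweq i k) 2
    simpa [Fin.snoc] using h
  have hprA : ∀ i k, principalRay (A i) ⬝ᵥ q k = (leftBlock (A i)).det * w i k := by
    intro i k
    rw [principalRay, smul_dotProduct, hrowA]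
    rfl
  have hrowB : ∀ i k, (A i * H⁻¹) 2 ⬝ᵥ (H *ᵥ q k) = w i k := by
    intro i k
    have h : (A i * H⁻¹) 2 ⬝ᵥ (H *ᵥ q k) = A i 2 ⬝ᵥ q k := congrFun (hBmul i k) 2
    rw [h, hrowA]
  have hprB : ∀ i k, principalRay (A i * H⁻¹) ⬝ᵥ (H *ᵥ q k)
      = (leftBlock (A i * H⁻¹)).det * w i k := by
    intro i k
    rw [principalRay, smul_dotProduct, hrowB]
    rfl
  have hBfin' : ∀ i, (leftBlock (A i * H⁻¹)).det ≠ 0 := fun i => hBfin i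
  have hpos : ∀ i j k, 0 < ((leftBlock (A i * H⁻¹)).det * w i k) *
      ((leftBlock (A j * H⁻¹)).det * w j k) := by
    intro i j k
    have hmem : H *ᵥ q k ∈ closure {r : Fin 4 → ℝ | nInf ⬝ᵥ r ≠ 0 ∧
        ∀ i, 0 < (principalRay (A i * H⁻¹) ⬝ᵥ r) * (nInf ⬝ᵥ r)} := (hchir k).1
    have hsub : closure {r : Fin 4 → ℝ | nInf ⬝ᵥ r ≠ 0 ∧
        ∀ i, 0 < (principalRay (A i * H⁻¹) ⬝ᵥ r) * (nInf ⬝ᵥ r)}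
        ⊆ {r | 0 ≤ (principalRay (A i * H⁻¹) ⬝ᵥ r) * (principalRay (A j * H⁻¹) ⬝ᵥ r)} := by
      apply closure_minimal
      · rintro r ⟨h0, hall⟩
        rw [Set.mem_setOf_eq]
        have hi := hall i
        have hj := hall j
        have ht2 : 0 < (nInf ⬝ᵥ r)^2 :=
          lt_of_le_of_ne (sq_nonneg _) (Ne.symm (pow_ne_zero 2 h0))
        nlinarith [mul_pos hi hj, ht2]
      · exact isClosed_le continuous_const ((dotContAux _).mul (dotContAux _))
    have h0 := hsub hmem
    rw [Set.mem_setOf_eq, hprB, hprB] at h0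
    exact lt_of_le_of_ne h0 (Ne.symm (mul_ne_zero
      (mul_ne_zero (hBfin' i) (hw0 i k)) (mul_ne_zero (hBfin' j) (hw0 j k))))
  have hwprod : ∀ i j k k', 0 < (w i k * w j k) * (w i k' * w j k') := by
    intro i j k k'
    have h1 := hpos i j k
    have h2 := hpos i j k'
    have hdij : 0 < ((leftBlock (A i * H⁻¹)).det * (leftBlock (A j * H⁻¹)).det)^2 :=
      lt_of_le_of_ne (sq_nonneg _)
        (Ne.symm (pow_ne_zero 2 (mul_ne_zero (hBfin' i) (hBfin' j))))
    nlinarith [mul_pos h1 h2]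
  have hprne : ∀ i k, principalRay (A i) ⬝ᵥ q k ≠ 0 := by
    intro i k
    rw [hprA]
    exact mul_ne_zero (hfin i) (hw0 i k)
  have key : ∀ i j k k',
      Real.sign (principalRay (A i) ⬝ᵥ q k) * Real.sign (principalRay (A j) ⬝ᵥ q k)
        = Real.sign (principalRay (A i) ⬝ᵥ q k') * Real.sign (principalRay (A j) ⬝ᵥ q k') := by
    intro i j k k'
    rw [← signMulAux (hprne i k) (hprne j k), ← signMulAux (hprne i k') (hprne j k')]
    apply signEqAux
    rw [hprA, hprA, hprA, hprA]
    have hW := hwprod i j k k'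
    have hdet2 : 0 < ((leftBlock (A i)).det * (leftBlock (A j)).det)^2 :=
      lt_of_le_of_ne (sq_nonneg _)
        (Ne.symm (pow_ne_zero 2 (mul_ne_zero (hfin i) (hfin j))))
    nlinarith [mul_pos hW hdet2]
  refine ⟨key, ?_⟩
  by_cases hm : m = 0
  · subst hm
    refine ⟨fun _ => 1, fun k => Or.inl rfl, ?_, fun i => i.elim0⟩
    simp only [one_smul]
    exact ⟨hfin, hq0, fun i k => ⟨w i k, hw0 i k, hweq i k⟩⟩
  · have i0 : Fin m := ⟨0, Nat.pos_of_ne_zero hm⟩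
    set ε : Fin n → ℝ := fun k => Real.sign (principalRay (A i0) ⬝ᵥ q k) with hε
    have hεpm : ∀ k, ε k = 1 ∨ ε k = -1 := fun k => signPMAux (hprne i0 k)
    have hεne : ∀ k, ε k ≠ 0 := by
      intro k
      rcases hεpm k with h|h <;> rw [h] <;> norm_num
    refine ⟨ε, hεpm, ⟨hfin, fun k => smul_ne_zero (hεne k) (hq0 k), ?_⟩, ?_⟩
    · intro i k
      refine ⟨ε k * w i k, mul_ne_zero (hεne k) (hw0 i k), ?_⟩
      rw [Matrix.mulVec_smul, hweq i k, smul_smul]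
    · intro i
      have hsgn : ∀ k, Real.sign (principalRay (A i) ⬝ᵥ (ε k • q k))
          = ε k * Real.sign (principalRay (A i) ⬝ᵥ q k) := by
        intro k
        rw [dotProduct_smul, smul_eq_mul, signMulAux (hεne k) (hprne i k)]
        congr 1
        rcases hεpm k with h|h
        · rw [h, Real.sign_one]
        · rw [h, Real.sign_of_neg (by norm_num : (-1:ℝ) < 0)]
      by_cases hn : n = 0
      · subst hn
        exact ⟨1, fun k => k.elim0⟩
      · have k0 : Fin n := ⟨0, Nat.pos_of_ne_zero hn⟩
        refine ⟨ε k0 * Real.sign (principalRay (A i) ⬝ᵥ q k0), fun k => ?_⟩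
        rw [hsgn k, hε]
        exact key i0 i k k0
end
end

section
/- Let R ∈ SO(3), let t ∈ ℝ³ be nonzero, and let v ∈ ℝ³. Then the 3×3 matrix U = R + t·vᵀ satisfies U·Uᵀ = I (equivalently Uᵀ·U = I) if and only if v = 0 or v = −(2/‖t‖²)·Rᵀt. Consequently, for a Euclidean camera A = [R | t] with t ≠ 0 and a homography H with H⁻¹ = [[I, 0],[vᵀ, δ]], δ ≠ 0, the camera A·H⁻¹ = [R + t·vᵀ | δ·t] is quasi-Euclidean if and only if v = 0 or v = −(2/‖t‖²)·Rᵀt. -/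
open Matrix

noncomputable section

/-- The 3x4 camera `[G | t]` with rows `(G_i, t_i)`. -/
def mkCam (G : Matrix (Fin 3) (Fin 3) ℝ) (t : Fin 3 → ℝ) : Matrix (Fin 3) (Fin 4) ℝ :=
  Matrix.of fun i => Fin.snoc (G i) (t i)

/-- The 4x4 matrix `[[I, 0], [vᵀ, δ]]`. -/
def mkH (v : Fin 3 → ℝ) (δ : ℝ) : Matrix (Fin 4) (Fin 4) ℝ :=
  Matrix.of (Fin.snoc (fun i : Fin 3 => Fin.snoc ((1 : Matrix (Fin 3) (Fin 3) ℝ) i) 0)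
    (Fin.snoc v δ))

/-- A camera `[U | t]` is quasi-Euclidean if `U Uᵀ = I`. -/
def QuasiEuclid (A : Matrix (Fin 3) (Fin 4) ℝ) : Prop :=
  leftBlock A * (leftBlock A).transpose = 1

/-!
Write `U = R + t vᵀ` with `R Rᵀ = 1`. Expanding, `U Uᵀ = 1 + w tᵀ + t (w + ‖v‖² t)ᵀ` with `w = R v`,
and for `t ≠ 0` this rank-two perturbation vanishes exactly when `w = -(‖v‖²/2) t`, i.e.
`v = -(‖v‖²/2) Rᵀ t`. Taking squared norms, `‖v‖² = (‖v‖²/2)² ‖t‖²`, so `‖v‖² = 0` or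
`‖v‖² = 4/‖t‖²`, which are the two solutions.
-/

namespace Matrix

variable {n K : Type*}

section CommRing

variable [CommRing K] [Fintype n]

theorem add_vecMulVec_mul_transpose (R : Matrix n n K) (t v : n → K) :
    (R + vecMulVec t v) * (R + vecMulVec t v)ᵀ =
      R * Rᵀ + (vecMulVec (R *ᵥ v) t + vecMulVec t (R *ᵥ v + (v ⬝ᵥ v) • t)) := by
  rw [transpose_add, transpose_vecMulVec, add_mul, mul_add, mul_add, mul_vecMulVec,
    vecMulVec_mul, vecMulVec_mul_vecMulVec, vecMul_transpose, vecMulVec_add]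
  abel

variable [DecidableEq n]

theorem mulVec_eq_smul_iff_of_mul_transpose_eq_one {R : Matrix n n K} (hR : R * Rᵀ = 1)
    (v t : n → K) (a : K) :
    R *ᵥ v = a • t ↔ v = a • (Rᵀ *ᵥ t) := by
  constructor
  · intro h
    rw [← mulVec_smul, ← h, mulVec_mulVec, mul_eq_one_comm.mp hR, one_mulVec]
  · rintro rfl
    rw [mulVec_smul, mulVec_mulVec, hR, one_mulVec]

theorem dotProduct_self_mulVec_of_transpose_mul_eq_one {A : Matrix n n K} (hA : Aᵀ * A = 1)
    (x : n → K) :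
    (A *ᵥ x) ⬝ᵥ (A *ᵥ x) = x ⬝ᵥ x := by
  rw [dotProduct_mulVec, ← vecMul_transpose, vecMul_vecMul, hA, vecMul_one]

end CommRing

section Field

variable [Field K] [NeZero (2 : K)]

theorem vecMulVec_add_vecMulVec_add_smul_eq_zero_iff {t : n → K} (ht : t ≠ 0) (w : n → K)
    (c : K) :
    vecMulVec w t + vecMulVec t (w + c • t) = 0 ↔ w = (-(c / 2)) • t := by
  constructor
  · intro h
    have hij : ∀ i j, w i * t j + t i * (w j + c * t j) = 0 := fun i j => by
      simpa [vecMulVec_apply] using congrFun (congrFun h i) j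
    -- the diagonal entry `(j, j)` determines `w j`, and then column `j` determines `w`
    obtain ⟨j, hj⟩ : ∃ j, t j ≠ 0 := Function.ne_iff.mp ht
    have hwj : w j = -(c / 2) * t j := by
      apply mul_right_cancel₀ hj
      linear_combination (norm := (field_simp; ring_nf)) hij j j / 2
    funext i
    apply mul_right_cancel₀ hj
    have hi := hij i j
    rw [hwj] at hi
    simp only [Pi.smul_apply, smul_eq_mul]
    linear_combination (norm := (field_simp; ring_nf)) hi
  · rintro rfl
    ext i j
    simp only [Matrix.add_apply, vecMulVec_apply, Pi.add_apply, Pi.smul_apply, smul_eq_mul,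
      Matrix.zero_apply]
    field_simp
    ring

variable [Fintype n]

theorem eq_neg_half_dotProduct_self_smul_iff (u v : n → K) :
    v = (-((v ⬝ᵥ v) / 2)) • u ↔ v = 0 ∨ v = (-(2 / (u ⬝ᵥ u))) • u := by
  have hsq : ∀ a : K, (a • u) ⬝ᵥ (a • u) = a ^ 2 * (u ⬝ᵥ u) := fun a => by
    rw [smul_dotProduct, dotProduct_smul, smul_eq_mul, smul_eq_mul, sq, mul_assoc]
  constructor
  · intro hv
    by_cases hc : v ⬝ᵥ v = 0
    · left
      rw [hv, hc, zero_div, neg_zero, zero_smul]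
    · right
      have hcs : (v ⬝ᵥ v) * (u ⬝ᵥ u) = 2 * 2 := by
        have hnorm := hsq (-((v ⬝ᵥ v) / 2))
        rw [← hv] at hnorm
        apply mul_left_cancel₀ hc
        linear_combination (norm := (field_simp; ring_nf)) -4 * hnorm
      have hs : u ⬝ᵥ u ≠ 0 := right_ne_zero_of_mul (hcs ▸ mul_ne_zero two_ne_zero two_ne_zero)
      rw [hv]
      congr 2
      field_simp
      linear_combination hcs
  · rintro (rfl | hv)
    · simp
    · by_cases hs : u ⬝ᵥ u = 0
      · simp_all
      · rw [hv, hsq]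
        congr 2
        field_simp

variable [DecidableEq n]

theorem add_vecMulVec_mul_transpose_eq_one_iff {R : Matrix n n K} (hR : R * Rᵀ = 1)
    {t : n → K} (ht : t ≠ 0) (v : n → K) :
    (R + vecMulVec t v) * (R + vecMulVec t v)ᵀ = 1 ↔
      v = 0 ∨ v = (-(2 / (t ⬝ᵥ t))) • (Rᵀ *ᵥ t) := by
  have hRt : Rᵀᵀ * Rᵀ = 1 := by rwa [transpose_transpose]
  rw [add_vecMulVec_mul_transpose, hR, add_eq_left,
    vecMulVec_add_vecMulVec_add_smul_eq_zero_iff ht, mulVec_eq_smul_iff_of_mul_transpose_eq_one hR,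
    eq_neg_half_dotProduct_self_smul_iff, dotProduct_self_mulVec_of_transpose_mul_eq_one hRt]

end Field

end Matrix

theorem leftBlock_mkCam (G : Matrix (Fin 3) (Fin 3) ℝ) (s : Fin 3 → ℝ) :
    leftBlock (mkCam G s) = G := by
  ext i j
  simp [leftBlock, mkCam]

theorem mkCam_mul_mkH (R : Matrix (Fin 3) (Fin 3) ℝ) (t v : Fin 3 → ℝ) (δ : ℝ) :
    mkCam R t * mkH v δ = mkCam (R + Matrix.vecMulVec t v) (δ • t) := by
  ext i j
  rw [Matrix.mul_apply, Fin.sum_univ_castSucc]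
  refine Fin.lastCases ?_ (fun j => ?_) j <;>
    simp only [mkCam, mkH, Matrix.of_apply, Fin.snoc_castSucc, Fin.snoc_last]
  · simp [mul_comm]
  · simp [Matrix.one_apply, Matrix.vecMulVec_apply]

theorem quasiEuclid_iff_twisted_pair_general
    (R : Matrix (Fin 3) (Fin 3) ℝ) (hR : R * R.transpose = 1)
    (t : Fin 3 → ℝ) (ht : t ≠ 0) (v : Fin 3 → ℝ) :
    ((R + Matrix.vecMulVec t v) * (R + Matrix.vecMulVec t v).transpose = 1 ↔
      (v = 0 ∨ v = (-(2 / (t ⬝ᵥ t))) • (R.transpose *ᵥ t))) ∧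
    ((R + Matrix.vecMulVec t v).transpose * (R + Matrix.vecMulVec t v) = 1 ↔
      (R + Matrix.vecMulVec t v) * (R + Matrix.vecMulVec t v).transpose = 1) ∧
    (∀ δ : ℝ, δ ≠ 0 →
      mkCam R t * mkH v δ = mkCam (R + Matrix.vecMulVec t v) (δ • t) ∧
      (QuasiEuclid (mkCam R t * mkH v δ) ↔
        (v = 0 ∨ v = (-(2 / (t ⬝ᵥ t))) • (R.transpose *ᵥ t)))) := by
  have hU := Matrix.add_vecMulVec_mul_transpose_eq_one_iff hR ht v
  refine ⟨hU, mul_eq_one_comm, fun δ _ => ⟨mkCam_mul_mkH R t v δ, ?_⟩⟩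
  rw [QuasiEuclid, mkCam_mul_mkH, leftBlock_mkCam, hU]

/-- for `R ∈ SO(3)`, `t ≠ 0` and `v ∈ ℝ³`, the matrix `U = R + t vᵀ`
satisfies `U Uᵀ = I` (equivalently `Uᵀ U = I`) iff `v = 0` or `v = −(2/‖t‖²) Rᵀ t`.
Consequently, for the Euclidean camera `A = [R|t]` and a homography `H` with
`H⁻¹ = [[I,0],[vᵀ,δ]]`, `δ ≠ 0`, the camera `A H⁻¹ = [R + t vᵀ | δ t]` is
quasi-Euclidean iff `v = 0` or `v = −(2/‖t‖²) Rᵀ t`. -/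
theorem quasiEuclid_iff_twisted_pair
    (R : Matrix (Fin 3) (Fin 3) ℝ) (hR : R * R.transpose = 1) (hRdet : R.det = 1)
    (t : Fin 3 → ℝ) (ht : t ≠ 0) (v : Fin 3 → ℝ) :
    ((R + Matrix.vecMulVec t v) * (R + Matrix.vecMulVec t v).transpose = 1 ↔
      (v = 0 ∨ v = (-(2 / (t ⬝ᵥ t))) • (R.transpose *ᵥ t))) ∧
    ((R + Matrix.vecMulVec t v).transpose * (R + Matrix.vecMulVec t v) = 1 ↔
      (R + Matrix.vecMulVec t v) * (R + Matrix.vecMulVec t v).transpose = 1) ∧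
    (∀ δ : ℝ, δ ≠ 0 →
      mkCam R t * mkH v δ = mkCam (R + Matrix.vecMulVec t v) (δ • t) ∧
      (QuasiEuclid (mkCam R t * mkH v δ) ↔
        (v = 0 ∨ v = (-(2 / (t ⬝ᵥ t))) • (R.transpose *ᵥ t)))) :=
  quasiEuclid_iff_twisted_pair_general R hR t ht v
end
end
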